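/- Multinomial–Poisson comparison: fix constants 0 < η₁ ≤ η₂. There is a constant C > 0 depending only on η₁, η₂ such that for all n ≥ 3, all integers N with √n ≤ N ≤ n, every pair p₁, p₂ with η₁/N ≤ p₁, p₂ ≤ η₂/N and p₁ + p₂ < 1, and all integers k₁, k₂ with η₁·n/(2N) ≤ k₁, k₂ ≤ 2·η₂·n/N, the multinomial probability B(k₁,k₂;n,p₁,p₂) = (n!/(k₁!·k₂!·(n−k₁−k₂)!))·p₁^{k₁}·p₂^{k₂}·(1−p₁−p₂)^{n−k₁−k₂} satisfies Poi(k₁;np₁)·Poi(k₂;np₂)·(1 − C·n/N²) ≤ B(k₁,k₂;n,p₁,p₂) ≤ Poi(k₁;np₁)·Poi(k₂;np₂)·(1 + C·n/N²). -/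

import Mathlib

open MeasureTheory ProbabilityTheory Filter Set

noncomputable section

/-- The Poisson probability mass function `Poi(k;λ)`. -/
def poiPMF (lam : ℝ) (k : ℕ) : ℝ := Real.exp (-lam) * lam ^ k / k.factorial

/-- The binomial probability mass function `B(k;n,p)`. -/
def binPMF (n k : ℕ) (p : ℝ) : ℝ := (n.choose k : ℝ) * p ^ k * (1 - p) ^ (n - k)

/-- The multinomial probability `B(k₁,k₂;n,p₁,p₂)`. -/
def multPMF (n k₁ k₂ : ℕ) (p₁ p₂ : ℝ) : ℝ :=
  ((n.factorial : ℝ) / (k₁.factorial * k₂.factorial * (n - k₁ - k₂).factorial)) *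
    p₁ ^ k₁ * p₂ ^ k₂ * (1 - p₁ - p₂) ^ (n - k₁ - k₂)

/-!
With `s = k₁ + k₂` and `σ = p₁ + p₂`, the multinomial probability is the Poisson product times
`n! / ((n - s)! n^s) · e^{nσ} (1 - σ)^{n - s}`. For `s ≤ n` the first factor lies in
`[1 - s²/n, 1]` and the second in `[1 - nσ², e^{sσ}]` (Bernoulli's inequality and `1 + x ≤ eˣ`).
Under the hypotheses `s²/n`, `nσ²` and `sσ` are all `O(n/N²)`, and `n/N² ≤ 1`. If `s > n`, then
`N < 4η₂`, so `n ≤ N²` is bounded while `n/N² ≥ 1/N²` is bounded below, and a crude bound on the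
ratio suffices.
-/

open Nat Real

lemma poiPMF_nonneg {lam : ℝ} (hlam : 0 ≤ lam) (k : ℕ) : 0 ≤ poiPMF lam k := by
  unfold poiPMF; positivity

def multPoiRatio (n s : ℕ) (σ : ℝ) : ℝ :=
  n ! / ((n - s)! * n ^ s) * exp (n * σ) * (1 - σ) ^ (n - s)

theorem multPMF_eq_poiPMF_mul_poiPMF_mul_multPoiRatio {n : ℕ} (hn : n ≠ 0) (k₁ k₂ : ℕ)
    (p₁ p₂ : ℝ) :
    multPMF n k₁ k₂ p₁ p₂ =
      poiPMF (n * p₁) k₁ * poiPMF (n * p₂) k₂ * multPoiRatio n (k₁ + k₂) (p₁ + p₂) := by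
  unfold multPMF poiPMF multPoiRatio
  rw [Nat.sub_sub, mul_add, exp_add, exp_neg, exp_neg, mul_pow, mul_pow, pow_add,
    show 1 - (p₁ + p₂) = 1 - p₁ - p₂ by ring]
  field_simp

lemma multPoiRatio_nonneg (n s : ℕ) {σ : ℝ} (hσ : σ ≤ 1) : 0 ≤ multPoiRatio n s σ := by
  unfold multPoiRatio
  have : 0 ≤ 1 - σ := by linarith
  positivity

lemma factorial_div_factorial_mul_pow_eq_descFactorial_div_pow {n s : ℕ} (hs : s ≤ n) :
    (n ! : ℝ) / ((n - s)! * n ^ s) = n.descFactorial s / n ^ s := by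
  rw [← Nat.factorial_mul_descFactorial hs, Nat.cast_mul, mul_div_mul_left _ _ (by positivity)]

lemma one_sub_sq_div_le_descFactorial_div_pow {n s : ℕ} (hn : 0 < n) (hs : s ≤ n) :
    1 - (s : ℝ) ^ 2 / n ≤ n.descFactorial s / n ^ s := by
  have hn' : (0 : ℝ) < n := by exact_mod_cast hn
  have hs' : (s : ℝ) ≤ n := by exact_mod_cast hs
  have hbase : ((n + 1 - s : ℕ) : ℝ) = n * (1 + -((s - 1) / n)) := by
    rw [Nat.cast_sub (by omega)]; push_cast; field_simp; ring
  calc 1 - (s : ℝ) ^ 2 / n ≤ 1 + s * -((s - 1 : ℝ) / n) := by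
        rw [mul_neg, ← mul_div_assoc, sub_eq_add_neg, add_le_add_iff_left, neg_le_neg_iff]
        gcongr; nlinarith
    _ ≤ (1 + -((s - 1) / n)) ^ s :=
        one_add_mul_le_pow (by rw [neg_le_neg_iff, div_le_iff₀ hn']; linarith) s
    _ = ((n + 1 - s : ℕ) : ℝ) ^ s / n ^ s := by
        rw [hbase, mul_pow, mul_div_cancel_left₀ _ (by positivity)]
    _ ≤ n.descFactorial s / n ^ s := by
        gcongr; exact_mod_cast Nat.pow_sub_le_descFactorial n s

lemma exp_mul_one_sub_pow_le {n s : ℕ} (hs : s ≤ n) {σ : ℝ} (hσ : σ ≤ 1) :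
    exp (n * σ) * (1 - σ) ^ (n - s) ≤ exp (s * σ) := by
  calc exp (n * σ) * (1 - σ) ^ (n - s) ≤ exp (n * σ) * exp (-σ) ^ (n - s) := by
        have : 1 - σ ≤ exp (-σ) := by linarith [add_one_le_exp (-σ)]
        gcongr
    _ = exp (s * σ) := by
        rw [← exp_nat_mul, ← exp_add, Nat.cast_sub hs]; ring_nf

lemma one_sub_mul_sq_le_exp_mul_one_sub_pow (n : ℕ) {m : ℕ} (hm : m ≤ n) {σ : ℝ} (hσ0 : 0 ≤ σ)
    (hσ1 : σ ≤ 1) : 1 - n * σ ^ 2 ≤ exp (n * σ) * (1 - σ) ^ m := by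
  have h1σ : 0 ≤ 1 - σ := by linarith
  calc 1 - n * σ ^ 2 = 1 + n * -σ ^ 2 := by ring
    _ ≤ (1 + -σ ^ 2) ^ n := one_add_mul_le_pow (by nlinarith) n
    _ ≤ (exp σ * (1 - σ)) ^ n := by
        gcongr
        · nlinarith
        · nlinarith [add_one_le_exp σ]
    _ = exp (n * σ) * (1 - σ) ^ n := by rw [mul_pow, exp_nat_mul]
    _ ≤ exp (n * σ) * (1 - σ) ^ m :=
        mul_le_mul_of_nonneg_left (pow_le_pow_of_le_one h1σ (by linarith) hm) (exp_pos _).le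

lemma multPoiRatio_le_exp {n s : ℕ} (hs : s ≤ n) {σ : ℝ} (hσ1 : σ ≤ 1) :
    multPoiRatio n s σ ≤ exp (s * σ) := by
  have hF : (n ! : ℝ) / ((n - s)! * n ^ s) ≤ 1 := by
    rw [factorial_div_factorial_mul_pow_eq_descFactorial_div_pow hs]
    exact div_le_one_of_le₀ (by exact_mod_cast Nat.descFactorial_le_pow n s) (by positivity)
  have hE := exp_mul_one_sub_pow_le hs hσ1
  have : 0 ≤ 1 - σ := by linarith
  unfold multPoiRatio
  rw [mul_assoc]
  exact (mul_le_of_le_one_left (by positivity) hF).trans hE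

lemma one_sub_add_le_mul {a b x y : ℝ} (ha : 0 ≤ a) (hb : 0 ≤ b) (hx : 0 ≤ x) (hy : 0 ≤ y)
    (hax : 1 - a ≤ x) (hby : 1 - b ≤ y) : 1 - (a + b) ≤ x * y := by
  rcases le_or_gt a 1 with ha1 | ha1
  · rcases le_or_gt b 1 with hb1 | hb1
    · nlinarith [mul_le_mul hax hby (by linarith) hx, mul_nonneg ha hb]
    · nlinarith [mul_nonneg hx hy]
  · nlinarith [mul_nonneg hx hy]

lemma one_sub_le_multPoiRatio {n s : ℕ} (hn : 0 < n) (hs : s ≤ n) {σ : ℝ} (hσ0 : 0 ≤ σ)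
    (hσ1 : σ ≤ 1) : 1 - ((s : ℝ) ^ 2 / n + n * σ ^ 2) ≤ multPoiRatio n s σ := by
  have : 0 ≤ 1 - σ := by linarith
  unfold multPoiRatio
  rw [mul_assoc, factorial_div_factorial_mul_pow_eq_descFactorial_div_pow hs]
  exact one_sub_add_le_mul (by positivity) (by positivity) (by positivity) (by positivity)
    (one_sub_sq_div_le_descFactorial_div_pow hn hs)
    (one_sub_mul_sq_le_exp_mul_one_sub_pow n (Nat.sub_le n s) hσ0 hσ1)

lemma multPoiRatio_le_factorial_mul_exp {n : ℕ} (hn : 0 < n) (s : ℕ) {σ : ℝ} (hσ0 : 0 ≤ σ)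
    (hσ1 : σ ≤ 1) : multPoiRatio n s σ ≤ n ! * exp n := by
  have hden : (1 : ℝ) ≤ (n - s)! * n ^ s :=
    one_le_mul_of_one_le_of_one_le (by exact_mod_cast (n - s).factorial_pos)
      (one_le_pow₀ (by exact_mod_cast hn))
  have h1σ : 0 ≤ 1 - σ := by linarith
  unfold multPoiRatio
  calc (n ! : ℝ) / ((n - s)! * n ^ s) * exp (n * σ) * (1 - σ) ^ (n - s)
      ≤ n ! * exp n * 1 := by
        gcongr
        · exact div_le_self (by positivity) hden
        · exact mul_le_of_le_one_right (by positivity) hσ1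
        · exact pow_le_one₀ h1σ (by linarith)
    _ = n ! * exp n := mul_one _

lemma exp_mul_le_one_add_mul (A : ℝ) {u : ℝ} (hu0 : 0 ≤ u) (hu1 : u ≤ 1) :
    exp (u * A) ≤ 1 + (exp A - 1) * u := by
  have := convexOn_exp.2 (mem_univ A) (mem_univ 0) hu0 (sub_nonneg.2 hu1) (by ring)
  simp only [smul_eq_mul, mul_zero, add_zero, exp_zero, mul_one] at this
  linarith

section RatioBounds

variable {η : ℝ} {n N s : ℕ} {σ : ℝ}

lemma sq_div_add_mul_sq_le_of_le_mul_div (hn : 0 < n) (hN : (0 : ℝ) < N) (hσ0 : 0 ≤ σ)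
    (hsN : (s : ℝ) ≤ 4 * η * n / N) (hσN : σ ≤ 2 * η / N) :
    (s : ℝ) ^ 2 / n + n * σ ^ 2 ≤ 20 * η ^ 2 * (n / N ^ 2) := by
  rw [le_div_iff₀ hN] at hsN hσN
  have hs2 : ((s : ℝ) * N) ^ 2 ≤ (4 * η * n) ^ 2 := pow_le_pow_left₀ (by positivity) hsN 2
  have hσ2 : (σ * N) ^ 2 ≤ (2 * η) ^ 2 := pow_le_pow_left₀ (by positivity) hσN 2
  calc (s : ℝ) ^ 2 / n + n * σ ^ 2
        = (((s : ℝ) * N) ^ 2 + n ^ 2 * (σ * N) ^ 2) / (n * N ^ 2) := by field_simp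
    _ ≤ ((4 * η * n) ^ 2 + n ^ 2 * (2 * η) ^ 2) / (n * N ^ 2) := by gcongr
    _ = 20 * η ^ 2 * (n / N ^ 2) := by field_simp; ring

lemma mul_le_of_le_mul_div (hN : (0 : ℝ) < N) (hσ0 : 0 ≤ σ) (hsN : (s : ℝ) ≤ 4 * η * n / N)
    (hσN : σ ≤ 2 * η / N) : s * σ ≤ 20 * η ^ 2 * (n / N ^ 2) := by
  rw [le_div_iff₀ hN] at hsN hσN
  calc (s : ℝ) * σ = (s * N) * (σ * N) / N ^ 2 := by field_simp
    _ ≤ (4 * η * n) * (2 * η) / N ^ 2 := by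
        gcongr ?_ / _
        exact mul_le_mul hsN hσN (by positivity) ((by positivity : (0 : ℝ) ≤ s * N).trans hsN)
    _ = 8 * η ^ 2 * (n / N ^ 2) := by ring
    _ ≤ 20 * η ^ 2 * (n / N ^ 2) := by gcongr ?_ * _; nlinarith [sq_nonneg η]

lemma abs_multPoiRatio_sub_one_le_of_le (hn : 0 < n) (hN : (0 : ℝ) < N) (hnN : (n : ℝ) ≤ N ^ 2)
    (hs : s ≤ n) (hσ0 : 0 ≤ σ) (hσ1 : σ ≤ 1) (hsN : (s : ℝ) ≤ 4 * η * n / N)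
    (hσN : σ ≤ 2 * η / N) : |multPoiRatio n s σ - 1| ≤ (exp (20 * η ^ 2) - 1) * (n / N ^ 2) := by
  have hu0 : (0 : ℝ) ≤ n / N ^ 2 := by positivity
  have hu1 : (n : ℝ) / N ^ 2 ≤ 1 := div_le_one_of_le₀ hnN (by positivity)
  have hA : 20 * η ^ 2 ≤ exp (20 * η ^ 2) - 1 := by linarith [add_one_le_exp (20 * η ^ 2)]
  have hlow := (one_sub_le_multPoiRatio hn hs hσ0 hσ1).trans'
    (sub_le_sub_left (sq_div_add_mul_sq_le_of_le_mul_div hn hN hσ0 hsN hσN) 1)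
  have hup : multPoiRatio n s σ ≤ 1 + (exp (20 * η ^ 2) - 1) * (n / N ^ 2) := by
    calc multPoiRatio n s σ ≤ exp (s * σ) := multPoiRatio_le_exp hs hσ1
      _ ≤ exp (n / N ^ 2 * (20 * η ^ 2)) := by
          rw [exp_le_exp, mul_comm (_ / _)]; exact mul_le_of_le_mul_div hN hσ0 hsN hσN
      _ ≤ 1 + (exp (20 * η ^ 2) - 1) * (n / N ^ 2) := exp_mul_le_one_add_mul _ hu0 hu1
  rw [abs_sub_le_iff]
  constructor <;> linarith [mul_le_mul_of_nonneg_right hA hu0]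

def multPoiThreshold (η : ℝ) : ℕ := ⌊16 * η ^ 2⌋₊ + 1

lemma abs_multPoiRatio_sub_one_le_of_lt (hn : 0 < n) (hN : (0 : ℝ) < N) (hnN : (n : ℝ) ≤ N ^ 2)
    (hsn : n < s) (hσ0 : 0 ≤ σ) (hσ1 : σ ≤ 1) (hsN : (s : ℝ) ≤ 4 * η * n / N) :
    |multPoiRatio n s σ - 1| ≤
      multPoiThreshold η * (multPoiThreshold η)! * exp (multPoiThreshold η) * (n / N ^ 2) := by
  set K := multPoiThreshold η
  have hn' : (0 : ℝ) < n := by exact_mod_cast hn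
  have hN4 : (N : ℝ) < 4 * η := by
    rw [le_div_iff₀ hN] at hsN
    have : (n : ℝ) * N < s * N := by gcongr
    exact lt_of_mul_lt_mul_left (by linarith) hn'.le
  have hNK : (N : ℝ) ^ 2 < K := by
    calc (N : ℝ) ^ 2 < (4 * η) ^ 2 := pow_lt_pow_left₀ hN4 hN.le two_ne_zero
      _ = 16 * η ^ 2 := by ring
      _ < K := by simp only [K, multPoiThreshold]; push_cast; exact Nat.lt_floor_add_one _
  have hnK : n ≤ K := by exact_mod_cast (hnN.trans hNK.le)
  have hRK : multPoiRatio n s σ ≤ K ! * exp K :=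
    (multPoiRatio_le_factorial_mul_exp hn s hσ0 hσ1).trans (by gcongr)
  have hKu : (K ! : ℝ) * exp K ≤ K * K ! * exp K * (n / N ^ 2) := by
    have : (1 : ℝ) ≤ K * (n / N ^ 2) := by
      rw [← mul_div_assoc, one_le_div (by positivity)]
      exact hNK.le.trans (le_mul_of_one_le_right (by positivity) (by exact_mod_cast hn))
    calc (K ! : ℝ) * exp K ≤ K ! * exp K * (K * (n / N ^ 2)) :=
          le_mul_of_one_le_right (by positivity) this
      _ = K * K ! * exp K * (n / N ^ 2) := by ring
  have h1 : (1 : ℝ) ≤ K ! * exp K := one_le_mul_of_one_le_of_one_le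
    (by exact_mod_cast K.factorial_pos) (one_le_exp (by positivity))
  rw [abs_sub_le_iff]
  constructor <;> linarith [multPoiRatio_nonneg n s hσ1]

/-- The first term handles `k₁ + k₂ ≤ n`. The second handles `k₁ + k₂ > n`, which forces
`n ≤ N ^ 2 < 16 η²`; there `n - k₁ - k₂` truncates to `0` and `multPMF` is a junk value. -/
def multPoiConst (η : ℝ) : ℝ :=
  exp (20 * η ^ 2) - 1 + multPoiThreshold η * (multPoiThreshold η)! * exp (multPoiThreshold η)

lemma multPoiConst_pos (η : ℝ) : 0 < multPoiConst η := by
  have : 0 ≤ exp (20 * η ^ 2) - 1 := by linarith [one_le_exp (by positivity : 0 ≤ 20 * η ^ 2)]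
  unfold multPoiConst multPoiThreshold
  positivity

lemma abs_multPoiRatio_sub_one_le (hn : 0 < n) (hN : (0 : ℝ) < N) (hnN : (n : ℝ) ≤ N ^ 2)
    (hσ0 : 0 ≤ σ) (hσ1 : σ ≤ 1) (hsN : (s : ℝ) ≤ 4 * η * n / N) (hσN : σ ≤ 2 * η / N) :
    |multPoiRatio n s σ - 1| ≤ multPoiConst η * (n / N ^ 2) := by
  have hK : 0 ≤ multPoiThreshold η * (multPoiThreshold η)! * exp (multPoiThreshold η) := by
    positivity
  have hA : 0 ≤ exp (20 * η ^ 2) - 1 := by linarith [one_le_exp (by positivity : 0 ≤ 20 * η ^ 2)]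
  have hu : (0 : ℝ) ≤ n / N ^ 2 := by positivity
  rcases le_or_gt s n with hs | hs
  · exact (abs_multPoiRatio_sub_one_le_of_le hn hN hnN hs hσ0 hσ1 hsN hσN).trans
      (mul_le_mul_of_nonneg_right (le_add_of_nonneg_right hK) hu)
  · exact (abs_multPoiRatio_sub_one_le_of_lt hn hN hnN hs hσ0 hσ1 hsN).trans
      (mul_le_mul_of_nonneg_right (le_add_of_nonneg_left hA) hu)

end RatioBounds

theorem multinomial_poisson_pmf_comparison_general (η₁ η₂ : ℝ) (h₁ : 0 < η₁) :
    ∃ C : ℝ, 0 < C ∧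
      ∀ (n N k₁ k₂ : ℕ) (p₁ p₂ : ℝ),
        3 ≤ n → Real.sqrt n ≤ (N : ℝ) → (N : ℝ) ≤ n →
        η₁ / N ≤ p₁ → p₁ ≤ η₂ / N → η₁ / N ≤ p₂ → p₂ ≤ η₂ / N → p₁ + p₂ < 1 →
        η₁ * n / (2 * N) ≤ (k₁ : ℝ) → (k₁ : ℝ) ≤ 2 * η₂ * n / N →
        η₁ * n / (2 * N) ≤ (k₂ : ℝ) → (k₂ : ℝ) ≤ 2 * η₂ * n / N →
        poiPMF ((n : ℝ) * p₁) k₁ * poiPMF ((n : ℝ) * p₂) k₂ * (1 - C * n / (N : ℝ) ^ 2)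
            ≤ multPMF n k₁ k₂ p₁ p₂ ∧
        multPMF n k₁ k₂ p₁ p₂
            ≤ poiPMF ((n : ℝ) * p₁) k₁ * poiPMF ((n : ℝ) * p₂) k₂ * (1 + C * n / (N : ℝ) ^ 2) := by
  refine ⟨multPoiConst η₂, multPoiConst_pos η₂, ?_⟩
  intro n N k₁ k₂ p₁ p₂ hn hnN _ hp₁ hp₁' hp₂ hp₂' hσ _ hk₁ _ hk₂
  have hnN2 : (n : ℝ) ≤ N ^ 2 := (Real.sqrt_le_iff.1 hnN).2
  have hN : (0 : ℝ) < N := (Real.sqrt_pos.2 (by positivity)).trans_le hnN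
  have hp₁0 : 0 ≤ p₁ := (div_pos h₁ hN).le.trans hp₁
  have hp₂0 : 0 ≤ p₂ := (div_pos h₁ hN).le.trans hp₂
  have hsN : ((k₁ + k₂ : ℕ) : ℝ) ≤ 4 * η₂ * n / N := by
    rw [Nat.cast_add, show 4 * η₂ * n / N = 2 * η₂ * n / N + 2 * η₂ * n / N by ring]
    exact add_le_add hk₁ hk₂
  have hσN : p₁ + p₂ ≤ 2 * η₂ / N := by
    rw [show 2 * η₂ / N = η₂ / N + η₂ / N by ring]
    exact add_le_add hp₁' hp₂'
  have hR := abs_multPoiRatio_sub_one_le (by omega) hN hnN2 (add_nonneg hp₁0 hp₂0) hσ.le hsN hσN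
  have hP := mul_nonneg (poiPMF_nonneg (by positivity : 0 ≤ (n : ℝ) * p₁) k₁)
    (poiPMF_nonneg (by positivity : 0 ≤ (n : ℝ) * p₂) k₂)
  rw [multPMF_eq_poiPMF_mul_poiPMF_mul_multPoiRatio (by omega), mul_div_assoc]
  obtain ⟨hlow, hup⟩ := abs_sub_le_iff.1 hR
  exact ⟨mul_le_mul_of_nonneg_left (by linarith) hP, mul_le_mul_of_nonneg_left (by linarith) hP⟩

/-- Property (c2): comparison of the multinomial probability with the product of
Poisson probability mass functions. -/
theorem multinomial_poisson_pmf_comparison (η₁ η₂ : ℝ) (h₁ : 0 < η₁) (h₁₂ : η₁ ≤ η₂) :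
    ∃ C : ℝ, 0 < C ∧
      ∀ (n N k₁ k₂ : ℕ) (p₁ p₂ : ℝ),
        3 ≤ n → Real.sqrt n ≤ (N : ℝ) → (N : ℝ) ≤ n →
        η₁ / N ≤ p₁ → p₁ ≤ η₂ / N → η₁ / N ≤ p₂ → p₂ ≤ η₂ / N → p₁ + p₂ < 1 →
        η₁ * n / (2 * N) ≤ (k₁ : ℝ) → (k₁ : ℝ) ≤ 2 * η₂ * n / N →
        η₁ * n / (2 * N) ≤ (k₂ : ℝ) → (k₂ : ℝ) ≤ 2 * η₂ * n / N →
        poiPMF ((n : ℝ) * p₁) k₁ * poiPMF ((n : ℝ) * p₂) k₂ * (1 - C * n / (N : ℝ) ^ 2)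
            ≤ multPMF n k₁ k₂ p₁ p₂ ∧
        multPMF n k₁ k₂ p₁ p₂
            ≤ poiPMF ((n : ℝ) * p₁) k₁ * poiPMF ((n : ℝ) * p₂) k₂ * (1 + C * n / (N : ℝ) ^ 2) :=
  multinomial_poisson_pmf_comparison_general η₁ η₂ h₁
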